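/- (Rogers's identity) For $|q| < 1$: $\sum_{m=0}^{\infty} \frac{q^{m^2}}{(q)_m} = (-q^2;q^2)_{\infty} \sum_{m=0}^{\infty} \frac{q^{m^2}}{(q^4;q^4)_m}$. -/

import Mathlib

/-!
Both sides are sums of the absolutely convergent double series
`∑_{n,k} q^{(n+k)² + k} / ((q²;q²)_n (q²;q²)_k)`.

Summing along the antidiagonals `n + k = N` gives the left side, because of the finite identity
`∑_{n+k=N} q^k / ((q²;q²)_n (q²;q²)_k) = 1 / (q)_N`, proved by induction on `N`: splitting
`1 - q^{2(n+k)} = (1 - q^{2n}) + q^{2n} (1 - q^{2k})` turns `1 - q^{2N}` times the `N`-th sum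
into `1 + q^N` times the previous one.

Summing over `k` first and using Euler's identity
`∏_j (1 + z t^j) = ∑_k t^{k(k-1)/2} z^k / (t;t)_k` at `t = q²`, `z = q^{2n+2}`, the `n`-th row
is `q^{n²} / (q²;q²)_n · (-q^{2n+2};q²)_∞ = q^{n²} / (q⁴;q⁴)_n · (-q²;q²)_∞`.
Euler's identity itself comes from the functional equation `S(z) = (1 + z) S(tz)` of its series
side: iterating it gives `S(z) = (-z;t)_n S(z tⁿ)`, and `S(z tⁿ) → S(0) = 1`.
-/

/-- `(q)ₘ = ∏_{k=1}^m (1 - q^k)` -/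
noncomputable def qPoch (q : ℂ) (n : ℕ) : ℂ := ∏ k ∈ Finset.range n, (1 - q ^ (k + 1))

open Filter Finset Topology

theorem Summable.tsum_eq_tsum_sum_antidiagonal {α A : Type*} [AddCommMonoid α]
    [TopologicalSpace α] [ContinuousAdd α] [T3Space α] [AddMonoid A] [HasAntidiagonal A]
    {f : A × A → α} (hf : Summable f) :
    ∑' p, f p = ∑' n, ∑ p ∈ antidiagonal n, f p := by
  rw [← HasAntidiagonal.sigmaAntidiagonalEquivProd.tsum_eq f,
    Summable.tsum_sigma' (f := fun c => f (HasAntidiagonal.sigmaAntidiagonalEquivProd c))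
      (fun n => (hasSum_fintype _).summable)
      (HasAntidiagonal.sigmaAntidiagonalEquivProd.summable_iff.mpr hf)]
  exact tsum_congr fun n => Finset.tsum_subtype _ f

lemma two_mul_choose_two_add_self (n : ℕ) : 2 * n.choose 2 + n = n ^ 2 := by
  induction n with
  | zero => rfl
  | succ n ih => rw [Nat.choose_succ_succ', Nat.choose_one_right]; nlinarith [ih]

lemma qPoch_zero (t : ℂ) : qPoch t 0 = 1 := prod_range_zero _

lemma qPoch_succ (t : ℂ) (n : ℕ) : qPoch t (n + 1) = qPoch t n * (1 - t ^ (n + 1)) :=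
  prod_range_succ _ _

lemma qPoch_sq (t : ℂ) (n : ℕ) :
    qPoch (t ^ 2) n = qPoch t n * ∏ j ∈ range n, (1 + t * t ^ j) := by
  rw [qPoch, qPoch, ← prod_mul_distrib]
  refine prod_congr rfl fun j _ => ?_
  ring

section qPoch

variable {t : ℂ}

lemma pow_le_norm_qPoch (ht : ‖t‖ < 1) (n : ℕ) : (1 - ‖t‖) ^ n ≤ ‖qPoch t n‖ := by
  induction n with
  | zero => simp [qPoch_zero]
  | succ n ih =>
    have h : 1 - ‖t‖ ≤ ‖1 - t ^ (n + 1)‖ := calc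
      1 - ‖t‖ ≤ 1 - ‖t ^ (n + 1)‖ := by
        gcongr; rw [norm_pow]; exact pow_le_of_le_one (norm_nonneg t) ht.le n.succ_ne_zero
      _ ≤ ‖1 - t ^ (n + 1)‖ := by simpa using norm_sub_norm_le (1 : ℂ) (t ^ (n + 1))
    rw [qPoch_succ, pow_succ, norm_mul]
    exact mul_le_mul ih h (by linarith) (norm_nonneg _)

lemma qPoch_ne_zero (ht : ‖t‖ < 1) (n : ℕ) : qPoch t n ≠ 0 :=
  norm_pos_iff.mp <| (pow_pos (by linarith) n).trans_le (pow_le_norm_qPoch ht n)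

lemma one_sub_pow_succ_ne_zero (ht : ‖t‖ < 1) (n : ℕ) : 1 - t ^ (n + 1) ≠ 0 := by
  have h := qPoch_ne_zero ht (n + 1)
  rw [qPoch_succ, mul_ne_zero_iff] at h
  exact h.2

lemma one_sub_pow_succ_div_qPoch_succ (ht : ‖t‖ < 1) (n : ℕ) :
    (1 - t ^ (n + 1)) / qPoch t (n + 1) = (qPoch t n)⁻¹ := by
  rw [qPoch_succ, div_mul_cancel_right₀ (one_sub_pow_succ_ne_zero ht n)]

end qPoch

lemma norm_sq_lt_one {q : ℂ} (hq : ‖q‖ < 1) : ‖q ^ 2‖ < 1 := by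
  simpa using pow_lt_one₀ (norm_nonneg q) hq two_ne_zero

lemma one_sub_sq_pow_mul_sum_antidiagonal_succ {q : ℂ} (hq : ‖q‖ < 1) (N : ℕ) :
    (1 - (q ^ 2) ^ (N + 1)) *
        ∑ p ∈ antidiagonal (N + 1), q ^ p.2 / (qPoch (q ^ 2) p.1 * qPoch (q ^ 2) p.2) =
      (1 + q ^ (N + 1)) *
        ∑ p ∈ antidiagonal N, q ^ p.2 / (qPoch (q ^ 2) p.1 * qPoch (q ^ 2) p.2) := by
  have hq2 := norm_sq_lt_one hq
  set P := qPoch (q ^ 2)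
  have split : ∀ p ∈ antidiagonal (N + 1),
      (1 - (q ^ 2) ^ (N + 1)) * (q ^ p.2 / (P p.1 * P p.2)) =
        (1 - (q ^ 2) ^ p.1) / P p.1 * (q ^ p.2 / P p.2) +
          (q ^ 2) ^ p.1 / P p.1 * (q ^ p.2 * (1 - (q ^ 2) ^ p.2) / P p.2) := by
    intro p hp
    rw [← mem_antidiagonal.mp hp]
    ring
  have first : ∑ p ∈ antidiagonal N, (1 - (q ^ 2) ^ (p.1 + 1)) / P (p.1 + 1) * (q ^ p.2 / P p.2)
      = ∑ p ∈ antidiagonal N, q ^ p.2 / (P p.1 * P p.2) :=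
    sum_congr rfl fun p _ => by rw [one_sub_pow_succ_div_qPoch_succ hq2]; ring
  have second : ∑ p ∈ antidiagonal N,
      (q ^ 2) ^ p.1 / P p.1 * (q ^ (p.2 + 1) * (1 - (q ^ 2) ^ (p.2 + 1)) / P (p.2 + 1))
      = q ^ (N + 1) * ∑ p ∈ antidiagonal N, q ^ p.1 / (P p.1 * P p.2) := by
    rw [mul_sum]
    refine sum_congr rfl fun p hp => ?_
    rw [mul_div_assoc, one_sub_pow_succ_div_qPoch_succ hq2, ← mem_antidiagonal.mp hp]
    ring
  have swap : ∑ p ∈ antidiagonal N, q ^ p.1 / (P p.1 * P p.2)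
      = ∑ p ∈ antidiagonal N, q ^ p.2 / (P p.1 * P p.2) := calc
    _ = ∑ p ∈ antidiagonal N, (fun p : ℕ × ℕ => q ^ p.2 / (P p.1 * P p.2)) p.swap :=
      sum_congr rfl fun p _ => by simp only [Prod.fst_swap, Prod.snd_swap, mul_comm]
    _ = _ := Nat.sum_antidiagonal_swap (f := fun p : ℕ × ℕ => q ^ p.2 / (P p.1 * P p.2))
  rw [mul_sum, sum_congr rfl split, sum_add_distrib, Nat.sum_antidiagonal_succ,
    Nat.sum_antidiagonal_succ']
  simp only [pow_zero, sub_self, zero_div, zero_mul, mul_zero, zero_add]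
  rw [first, second, swap]
  ring

theorem sum_antidiagonal_pow_div_qPoch_sq {q : ℂ} (hq : ‖q‖ < 1) (N : ℕ) :
    ∑ p ∈ antidiagonal N, q ^ p.2 / (qPoch (q ^ 2) p.1 * qPoch (q ^ 2) p.2) =
      (qPoch q N)⁻¹ := by
  induction N with
  | zero => simp [qPoch_zero]
  | succ N ih =>
    have recurrence := one_sub_sq_pow_mul_sum_antidiagonal_succ hq N
    have hfac : 1 - (q ^ 2) ^ (N + 1) = (1 - q ^ (N + 1)) * (1 + q ^ (N + 1)) := by ring
    have hne := one_sub_pow_succ_ne_zero (norm_sq_lt_one hq) N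
    rw [hfac, ih] at recurrence
    rw [hfac] at hne
    obtain ⟨hsub, hadd⟩ := mul_ne_zero_iff.mp hne
    rw [qPoch_succ, mul_inv, eq_mul_inv_iff_mul_eq₀ hsub]
    apply mul_left_cancel₀ hadd
    linear_combination recurrence

lemma summable_pow_choose_two_mul_pow {r C : ℝ} (hr₀ : 0 ≤ r) (hr₁ : r < 1) (hC : 0 ≤ C) :
    Summable fun n => r ^ n.choose 2 * C ^ n := by
  have hlim : Tendsto (fun n : ℕ => r ^ n * C) atTop (𝓝 0) := by
    simpa using (tendsto_pow_atTop_nhds_zero_of_lt_one hr₀ hr₁).mul_const C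
  refine summable_of_ratio_norm_eventually_le (r := 1 / 2) (by norm_num) ?_
  filter_upwards [hlim.eventually_le_const (by norm_num : (0 : ℝ) < 1 / 2)] with n hn
  rw [Real.norm_of_nonneg (by positivity), Real.norm_of_nonneg (by positivity),
    Nat.choose_succ_succ', Nat.choose_one_right]
  calc r ^ (n + n.choose 2) * C ^ (n + 1) = (r ^ n * C) * (r ^ n.choose 2 * C ^ n) := by ring
    _ ≤ 1 / 2 * (r ^ n.choose 2 * C ^ n) := by gcongr

noncomputable def eulerCoeff (t : ℂ) (k : ℕ) : ℂ := t ^ k.choose 2 / qPoch t k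

lemma eulerCoeff_zero (t : ℂ) : eulerCoeff t 0 = 1 := by
  rw [eulerCoeff, Nat.choose_zero_succ, pow_zero, qPoch_zero, div_one]

section Euler

variable {t : ℂ}

lemma summable_norm_eulerCoeff_mul_pow (ht : ‖t‖ < 1) (z : ℂ) :
    Summable fun k => ‖eulerCoeff t k * z ^ k‖ := by
  have hpos : 0 < 1 - ‖t‖ := by linarith
  refine (summable_pow_choose_two_mul_pow (norm_nonneg t) ht
    (div_nonneg (norm_nonneg z) hpos.le)).of_nonneg_of_le (fun _ => norm_nonneg _) fun k => ?_
  rw [eulerCoeff, norm_mul, norm_div, norm_pow, norm_pow, div_pow, div_mul_eq_mul_div,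
    mul_div_assoc]
  gcongr
  exact pow_le_norm_qPoch ht k

lemma eulerCoeff_succ (ht : ‖t‖ < 1) (k : ℕ) :
    eulerCoeff t (k + 1) = t ^ (k + 1) * eulerCoeff t (k + 1) + t ^ k * eulerCoeff t k := by
  have h := one_sub_pow_succ_ne_zero ht k
  rw [eulerCoeff, eulerCoeff, qPoch_succ, Nat.choose_succ_succ', Nat.choose_one_right, pow_add]
  field_simp
  ring

lemma tsum_eulerCoeff_mul_pow_eq_one_add_mul (ht : ‖t‖ < 1) (z : ℂ) :
    ∑' k, eulerCoeff t k * z ^ k = (1 + z) * ∑' k, eulerCoeff t k * (z * t) ^ k := by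
  set b : ℕ → ℂ := fun k => eulerCoeff t k * (z * t) ^ k
  have hb : Summable b := (summable_norm_eulerCoeff_mul_pow ht (z * t)).of_norm
  have hterm : ∀ k, eulerCoeff t (k + 1) * z ^ (k + 1) = b (k + 1) + z * b k := fun k => by
    rw [eulerCoeff_succ ht k]; simp only [b]; ring
  have hb0 : b 0 = 1 := by simp only [b, eulerCoeff_zero, pow_zero, mul_one]
  rw [(summable_norm_eulerCoeff_mul_pow ht z).of_norm.tsum_eq_zero_add, tsum_congr hterm,
    ((summable_nat_add_iff 1).mpr hb).tsum_add (hb.mul_left z), tsum_mul_left,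
    add_mul, one_mul, hb.tsum_eq_zero_add, hb0, eulerCoeff_zero, pow_zero, mul_one]
  ring

lemma tsum_eulerCoeff_mul_pow_eq_prod_mul (ht : ‖t‖ < 1) (z : ℂ) (n : ℕ) :
    ∑' k, eulerCoeff t k * z ^ k =
      (∏ j ∈ range n, (1 + z * t ^ j)) * ∑' k, eulerCoeff t k * (z * t ^ n) ^ k := by
  induction n with
  | zero => simp
  | succ n ih =>
    rw [ih, tsum_eulerCoeff_mul_pow_eq_one_add_mul ht, prod_range_succ, pow_succ, mul_assoc z,
      mul_assoc]

lemma tendsto_tsum_eulerCoeff_mul_pow (ht : ‖t‖ < 1) (z : ℂ) :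
    Tendsto (fun n => ∑' k, eulerCoeff t k * (z * t ^ n) ^ k) atTop (𝓝 1) := by
  have hlim : ∀ k, Tendsto (fun n => eulerCoeff t k * (z * t ^ n) ^ k) atTop
      (𝓝 (eulerCoeff t k * (z * 0) ^ k)) := fun k =>
    (((tendsto_pow_atTop_nhds_zero_of_norm_lt_one ht).const_mul z).pow k).const_mul _
  have hbound (n k : ℕ) :
      ‖eulerCoeff t k * (z * t ^ n) ^ k‖ ≤ ‖eulerCoeff t k * z ^ k‖ := by
    have htn : ‖t ^ n‖ ≤ 1 := by simpa using pow_le_one₀ (norm_nonneg t) ht.le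
    rw [norm_mul, norm_mul, mul_pow, norm_mul, norm_pow, norm_pow]
    gcongr
    exact mul_le_of_le_one_right (by positivity) (pow_le_one₀ (norm_nonneg _) htn)
  have h := tendsto_tsum_of_dominated_convergence (summable_norm_eulerCoeff_mul_pow ht z) hlim
    (Eventually.of_forall hbound)
  rwa [tsum_eq_single 0 fun k hk => by simp [hk], pow_zero, mul_one, eulerCoeff_zero] at h

theorem tprod_one_add_mul_pow (ht : ‖t‖ < 1) (z : ℂ) :
    ∏' j, (1 + z * t ^ j) = ∑' k, eulerCoeff t k * z ^ k := by
  have hmul : Multipliable fun j => 1 + z * t ^ j := by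
    refine multipliable_one_add_of_summable ?_
    simpa [norm_mul, norm_pow] using
      (summable_geometric_of_lt_one (norm_nonneg t) ht).mul_left ‖z‖
  have hlim := hmul.tendsto_prod_tprod_nat.mul (tendsto_tsum_eulerCoeff_mul_pow ht z)
  rw [mul_one] at hlim
  exact tendsto_nhds_unique hlim
    (tendsto_const_nhds.congr (tsum_eulerCoeff_mul_pow_eq_prod_mul ht z))

end Euler

-- The term of the double series, factored as Euler's identity sums it over `k`.
noncomputable def rogersTerm (q : ℂ) (n k : ℕ) : ℂ :=
  q ^ (n ^ 2) / qPoch (q ^ 2) n * (eulerCoeff (q ^ 2) k * (q ^ 2 * (q ^ 2) ^ n) ^ k)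

section rogersTerm

variable {q : ℂ}

lemma eulerCoeff_sq_mul_pow (n : ℕ) :
    eulerCoeff (q ^ 2) n * q ^ n = q ^ (n ^ 2) / qPoch (q ^ 2) n := by
  rw [eulerCoeff, div_mul_eq_mul_div, ← pow_mul, ← pow_add, two_mul_choose_two_add_self]

lemma rogersTerm_eq (i j : ℕ) :
    rogersTerm q i j = q ^ ((i + j) ^ 2) * (q ^ j / (qPoch (q ^ 2) i * qPoch (q ^ 2) j)) := by
  have hexp : (i + j) ^ 2 + j = i ^ 2 + (2 * j.choose 2 + 2 * (1 + i) * j) := by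
    linarith [two_mul_choose_two_add_self j]
  rw [rogersTerm, eulerCoeff, ← mul_div_assoc, ← pow_add, hexp]
  ring

lemma summable_rogersTerm (hq : ‖q‖ < 1) : Summable (Function.uncurry (rogersTerm q)) := by
  have hq2 := norm_sq_lt_one hq
  have hcoeff : Summable fun k => ‖eulerCoeff (q ^ 2) k‖ := by
    simpa using summable_norm_eulerCoeff_mul_pow hq2 1
  refine .of_norm_bounded ((summable_norm_eulerCoeff_mul_pow hq2 q).mul_norm hcoeff)
    fun ⟨n, k⟩ => ?_
  have hz : ‖q ^ 2 * (q ^ 2) ^ n‖ ≤ 1 := by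
    rw [← pow_succ', norm_pow]; exact pow_le_one₀ (norm_nonneg _) hq2.le
  have hzk : ‖(q ^ 2 * (q ^ 2) ^ n) ^ k‖ ≤ 1 := by
    rw [norm_pow]; exact pow_le_one₀ (norm_nonneg _) hz
  dsimp only [Function.uncurry_apply_pair]
  rw [rogersTerm, ← eulerCoeff_sq_mul_pow, ← mul_assoc, norm_mul _ ((q ^ 2 * (q ^ 2) ^ n) ^ k)]
  exact mul_le_of_le_one_right (norm_nonneg _) hzk

lemma tsum_rogersTerm (hq : ‖q‖ < 1) (n : ℕ) :
    ∑' k, rogersTerm q n k =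
      q ^ (n ^ 2) / qPoch (q ^ 4) n * ∏' j, (1 + q ^ 2 * (q ^ 2) ^ j) := by
  have hq2 := norm_sq_lt_one hq
  have hprod := tsum_eulerCoeff_mul_pow_eq_prod_mul hq2 (q ^ 2) n
  have h4 : qPoch (q ^ 4) n = qPoch (q ^ 2) n * ∏ j ∈ range n, (1 + q ^ 2 * (q ^ 2) ^ j) := by
    rw [← qPoch_sq, ← pow_mul]
  have hne : ∏ j ∈ range n, (1 + q ^ 2 * (q ^ 2) ^ j) ≠ 0 := by
    have := qPoch_ne_zero (norm_sq_lt_one hq2) n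
    rw [qPoch_sq, mul_ne_zero_iff] at this
    exact this.2
  simp only [rogersTerm]
  rw [tsum_mul_left, tprod_one_add_mul_pow hq2, hprod, h4]
  field_simp

lemma sum_antidiagonal_rogersTerm (hq : ‖q‖ < 1) (N : ℕ) :
    ∑ p ∈ antidiagonal N, Function.uncurry (rogersTerm q) p = q ^ (N ^ 2) / qPoch q N := by
  rw [div_eq_mul_inv, ← sum_antidiagonal_pow_div_qPoch_sq hq, mul_sum]
  refine sum_congr rfl fun ⟨i, j⟩ hp => ?_
  rw [Function.uncurry_apply_pair, rogersTerm_eq, mem_antidiagonal.mp hp]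

end rogersTerm

/-- Rogers's identity: `∑ q^{m²}/(q)ₘ = (-q²;q²)_∞ ∑ q^{m²}/(q⁴;q⁴)ₘ`. -/
theorem rogers_identity_one (q : ℂ) (hq : ‖q‖ < 1) :
    ∑' m : ℕ, q ^ (m ^ 2) / qPoch q m =
      (∏' k : ℕ, (1 + q ^ 2 * (q ^ 2) ^ k)) * ∑' m : ℕ, q ^ (m ^ 2) / qPoch (q ^ 4) m := by
  have hsum := summable_rogersTerm hq
  calc ∑' m : ℕ, q ^ (m ^ 2) / qPoch q m
      = ∑' N, ∑ p ∈ antidiagonal N, Function.uncurry (rogersTerm q) p :=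
        tsum_congr fun N => (sum_antidiagonal_rogersTerm hq N).symm
    _ = ∑' n, ∑' k, rogersTerm q n k := by
        rw [← hsum.tsum_eq_tsum_sum_antidiagonal, hsum.tsum_prod_uncurry hsum.prod_factor]
    _ = _ := by simp_rw [tsum_rogersTerm hq, tsum_mul_right, mul_comm]
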